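/- Let g_{r,r}(x) = (r^r/Γ(r)) x^{r-1} e^{-rx} for x > 0 be the Gamma(r,r) density with r > 1. Then for any x ≥ 0 and any g ≥ 1, |G_{r,r}(x + (1-x)/g) - G_{r,r}(x) - g_{r,r}(x)(1-x)/g| ≤ C g^{-min{r,2}} for a constant C depending only on r, where G_{r,r} is the corresponding CDF. -/

import Mathlib

open MeasureTheory Real

/-- The Gamma(r, r) density. -/
noncomputable def gammaRRpdf (r y : ℝ) : ℝ :=
  r ^ r / Real.Gamma r * y ^ (r - 1) * Real.exp (-r * y)

/-- The Gamma(r, r) distribution function. -/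
noncomputable def gammaRRcdf (r x : ℝ) : ℝ :=
  ∫ u in Set.Ioc (0 : ℝ) x, gammaRRpdf r u

noncomputable def gammaRRpdf' (r v : ℝ) : ℝ :=
  r ^ r / Real.Gamma r *
    ((r - 1) * v ^ (r - 2) * Real.exp (-r * v) + v ^ (r - 1) * (Real.exp (-r * v) * -r))

lemma pow_le_factorial_mul_exp {x : ℝ} (hx : 0 ≤ x) (n : ℕ) :
    x ^ n ≤ (n.factorial : ℝ) * Real.exp x := by
  have h := Real.sum_le_exp_of_nonneg hx (n + 1)
  have h2 : x ^ n / (n.factorial : ℝ) ≤ ∑ i ∈ Finset.range (n+1), x ^ i / i.factorial :=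
    Finset.single_le_sum (f := fun i => x ^ i / (i.factorial : ℝ))
      (fun i _ => by positivity) (Finset.self_mem_range_succ n)
  have hn : (0:ℝ) < n.factorial := by positivity
  have := h2.trans h
  rw [div_le_iff₀ hn] at this
  linarith [this]

lemma rpow_le_mul_exp (p ε : ℝ) (hp : 0 ≤ p) (hε : 0 < ε) :
    ∃ M : ℝ, 0 ≤ M ∧ ∀ v : ℝ, 0 ≤ v → v ^ p ≤ M * Real.exp (ε * v) := by
  set n := ⌈p⌉₊ with hn
  refine ⟨max ((n.factorial : ℝ) / ε ^ n) 1, le_max_of_le_right zero_le_one, fun v hv => ?_⟩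
  have hexp1 : 1 ≤ Real.exp (ε * v) := Real.one_le_exp (by positivity)
  rcases le_or_gt v 1 with hv1 | hv1
  · calc v ^ p ≤ 1 := Real.rpow_le_one hv hv1 hp
    _ ≤ max ((n.factorial : ℝ) / ε ^ n) 1 * Real.exp (ε * v) := by
        nlinarith [le_max_right ((n.factorial : ℝ) / ε ^ n) 1]
  · have h1 : v ^ p ≤ v ^ (n:ℝ) :=
      Real.rpow_le_rpow_of_exponent_le hv1.le (Nat.le_ceil p)
    rw [Real.rpow_natCast] at h1
    have h2 : (ε * v) ^ n ≤ n.factorial * Real.exp (ε * v) :=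
      pow_le_factorial_mul_exp (by positivity) n
    rw [mul_pow] at h2
    have hεn : (0:ℝ) < ε ^ n := by positivity
    have h3 : v ^ n ≤ (n.factorial / ε ^ n) * Real.exp (ε * v) := by
      rw [div_mul_eq_mul_div, le_div_iff₀ hεn]; nlinarith
    calc v ^ p ≤ v ^ n := h1
    _ ≤ (n.factorial / ε ^ n) * Real.exp (ε * v) := h3
    _ ≤ max ((n.factorial : ℝ) / ε ^ n) 1 * Real.exp (ε * v) :=
        mul_le_mul_of_nonneg_right (le_max_left _ _) (Real.exp_pos _).le

lemma rpow_sub_rpow_le {p a b : ℝ} (hp0 : 0 ≤ p) (hp1 : p ≤ 1) (hb : 0 ≤ b) (hba : b ≤ a) :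
    a ^ p - b ^ p ≤ (a - b) ^ p := by
  have key := NNReal.rpow_add_le_add_rpow ((a - b).toNNReal) (b.toNNReal) hp0 hp1
  have hsum : (a - b).toNNReal + b.toNNReal = a.toNNReal := by
    rw [← Real.toNNReal_add (by linarith) hb]; ring_nf
  rw [hsum] at key
  have := NNReal.coe_le_coe.mpr key
  push_cast [NNReal.coe_rpow] at this
  rw [Real.coe_toNNReal _ (by linarith : (0:ℝ) ≤ a), Real.coe_toNNReal _ (by linarith : (0:ℝ) ≤ a - b),
    Real.coe_toNNReal _ hb] at this
  linarith

lemma exp_sub_exp_le {a b : ℝ} (ha : a ≤ 0) (hab : b ≤ a) :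
    Real.exp a - Real.exp b ≤ a - b := by
  have h := Real.add_one_le_exp (b - a)
  have h2 : Real.exp a - Real.exp b = Real.exp a * (1 - Real.exp (b - a)) := by
    rw [mul_sub, mul_one, ← Real.exp_add]; ring_nf
  have hea : Real.exp a ≤ 1 := Real.exp_le_one_iff.mpr ha
  have heba : Real.exp (b - a) ≤ 1 := Real.exp_le_one_iff.mpr (by linarith)
  nlinarith [Real.exp_pos a]

lemma hasDerivAt_gammaRRpdf (r : ℝ) {v : ℝ} (hv : v ≠ 0 ∨ 2 ≤ r) :
    HasDerivAt (gammaRRpdf r) (gammaRRpdf' r v) v := by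
  have h1 : HasDerivAt (fun y : ℝ => y ^ (r - 1)) ((r - 1) * v ^ (r - 1 - 1)) v :=
    Real.hasDerivAt_rpow_const (hv.imp id (fun h => by linarith))
  have h2 : HasDerivAt (fun y : ℝ => Real.exp (-r * y)) (Real.exp (-r * v) * (-r * 1)) v :=
    ((hasDerivAt_id v).const_mul (-r)).exp
  have h3 := (h1.const_mul (r ^ r / Real.Gamma r)).mul h2
  have : r - 1 - 1 = r - 2 := by ring
  rw [this] at h3
  refine h3.congr_deriv ?_
  unfold gammaRRpdf'
  ring

lemma gammaRRpdf_sub_le (r : ℝ) {a b K : ℝ} (ha : 0 < a ∨ 2 ≤ r) (hab : a ≤ b)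
    (hK : ∀ v ∈ Set.Icc a b, |gammaRRpdf' r v| ≤ K) :
    |gammaRRpdf r b - gammaRRpdf r a| ≤ K * (b - a) := by
  have hder : ∀ v ∈ Set.Icc a b,
      HasDerivWithinAt (gammaRRpdf r) (gammaRRpdf' r v) (Set.Icc a b) v := by
    intro v hvm
    refine (hasDerivAt_gammaRRpdf r ?_).hasDerivWithinAt
    rcases ha with ha | ha
    · exact Or.inl (ne_of_gt (lt_of_lt_of_le ha hvm.1))
    · exact Or.inr ha
  have := norm_image_sub_le_of_norm_deriv_le_segment' hder
    (fun v hv => hK v (Set.Ico_subset_Icc_self hv)) b (Set.right_mem_Icc.mpr hab)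
  simpa [Real.norm_eq_abs] using this

lemma gammaRRpdf'_bound (r : ℝ) (hr : 1 < r) :
    ∃ D : ℝ, 0 ≤ D ∧ ∀ v : ℝ, 1 ≤ v → |gammaRRpdf' r v| ≤ D * Real.exp (-v) := by
  set c := r ^ r / Real.Gamma r with hc
  have hcpos : 0 < c := div_pos (Real.rpow_pos_of_pos (by linarith) r) (Real.Gamma_pos_of_pos (by linarith))
  obtain ⟨M, hM0, hM⟩ := rpow_le_mul_exp (r - 1) (r - 1) (by linarith) (by linarith)
  refine ⟨c * (2 * r) * M, by positivity, fun v hv => ?_⟩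
  have hv0 : (0:ℝ) ≤ v := by linarith
  have hb1 : v ^ (r - 2) ≤ v ^ (r - 1) :=
    Real.rpow_le_rpow_of_exponent_le hv (by linarith)
  have hb2 : (0:ℝ) ≤ v ^ (r - 1) := Real.rpow_nonneg hv0 _
  have hb3 : (0:ℝ) ≤ v ^ (r - 2) := Real.rpow_nonneg hv0 _
  have hexp : (0:ℝ) < Real.exp (-r * v) := Real.exp_pos _
  have habs : |gammaRRpdf' r v| ≤ c * (2 * r) * (v ^ (r - 1) * Real.exp (-r * v)) := by
    unfold gammaRRpdf'
    rw [abs_mul, abs_of_pos hcpos]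
    have h1 : |(r - 1) * v ^ (r - 2) * Real.exp (-r * v) + v ^ (r - 1) * (Real.exp (-r * v) * -r)|
        ≤ (r - 1) * v ^ (r - 2) * Real.exp (-r * v) + v ^ (r - 1) * (Real.exp (-r * v) * r) := by
      refine (abs_add_le _ _).trans ?_
      rw [abs_of_nonneg (mul_nonneg (mul_nonneg (by linarith) hb3) hexp.le), abs_mul, abs_mul,
        abs_neg, abs_of_nonneg hexp.le, abs_of_nonneg hb2, abs_of_pos (by linarith : (0:ℝ) < r)]
    refine (mul_le_mul_of_nonneg_left h1 hcpos.le).trans ?_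
    have : (r - 1) * v ^ (r - 2) * Real.exp (-r * v) + v ^ (r - 1) * (Real.exp (-r * v) * r)
        ≤ 2 * r * (v ^ (r - 1) * Real.exp (-r * v)) := by
      nlinarith [mul_le_mul_of_nonneg_right hb1 hexp.le]
    nlinarith
  refine habs.trans ?_
  have h4 : v ^ (r - 1) * Real.exp (-r * v) ≤ M * Real.exp (-v) := by
    have := mul_le_mul_of_nonneg_right (hM v hv0) hexp.le
    calc v ^ (r - 1) * Real.exp (-r * v) ≤ M * Real.exp ((r - 1) * v) * Real.exp (-r * v) := this
    _ = M * Real.exp ((r - 1) * v + -r * v) := by rw [mul_assoc, ← Real.exp_add]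
    _ = M * Real.exp (-v) := by ring_nf
  refine le_trans (mul_le_mul_of_nonneg_left h4 (by positivity)) (le_of_eq (by ring))

lemma gammaRRpdf'_bound01 (r : ℝ) (hr : 1 < r) (hr2 : 2 ≤ r) :
    ∀ v : ℝ, v ∈ Set.Icc (0:ℝ) 1 →
      |gammaRRpdf' r v| ≤ r ^ r / Real.Gamma r * (2 * r) := by
  intro v ⟨hv0, hv1⟩
  set c := r ^ r / Real.Gamma r with hc
  have hcpos : 0 < c := div_pos (Real.rpow_pos_of_pos (by linarith) r) (Real.Gamma_pos_of_pos (by linarith))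
  have hb1 : v ^ (r - 2) ≤ 1 := Real.rpow_le_one hv0 hv1 (by linarith)
  have hb2 : v ^ (r - 1) ≤ 1 := Real.rpow_le_one hv0 hv1 (by linarith)
  have hb3 : (0:ℝ) ≤ v ^ (r - 2) := Real.rpow_nonneg hv0 _
  have hb4 : (0:ℝ) ≤ v ^ (r - 1) := Real.rpow_nonneg hv0 _
  have hexp : Real.exp (-r * v) ≤ 1 := Real.exp_le_one_iff.mpr (by nlinarith)
  have hexp0 : (0:ℝ) < Real.exp (-r * v) := Real.exp_pos _
  unfold gammaRRpdf'
  rw [abs_mul, abs_of_pos hcpos]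
  have h1 : |(r - 1) * v ^ (r - 2) * Real.exp (-r * v) + v ^ (r - 1) * (Real.exp (-r * v) * -r)|
      ≤ (r - 1) * v ^ (r - 2) * Real.exp (-r * v) + v ^ (r - 1) * (Real.exp (-r * v) * r) := by
    refine (abs_add_le _ _).trans ?_
    rw [abs_of_nonneg (mul_nonneg (mul_nonneg (by linarith) hb3) hexp0.le), abs_mul, abs_mul,
      abs_neg, abs_of_nonneg hexp0.le, abs_of_nonneg hb4, abs_of_pos (by linarith : (0:ℝ) < r)]
  have hAE : v ^ (r - 2) * Real.exp (-r * v) ≤ 1 := mul_le_one₀ hb1 hexp0.le hexp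
  have hBE : v ^ (r - 1) * Real.exp (-r * v) ≤ 1 := mul_le_one₀ hb2 hexp0.le hexp
  have t1 : (r - 1) * v ^ (r - 2) * Real.exp (-r * v) ≤ r - 1 := by nlinarith
  have t2 : v ^ (r - 1) * (Real.exp (-r * v) * r) ≤ r := by nlinarith
  have h2 : (r - 1) * v ^ (r - 2) * Real.exp (-r * v) + v ^ (r - 1) * (Real.exp (-r * v) * r)
      ≤ 2 * r := by linarith
  nlinarith [mul_le_mul_of_nonneg_left h1 hcpos.le]

lemma gammaRRpdf_nonneg (r : ℝ) (hr : 1 < r) {x : ℝ} (hx : 0 ≤ x) :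
    0 ≤ gammaRRpdf r x := by
  unfold gammaRRpdf
  have h1 : (0:ℝ) ≤ r ^ r / Real.Gamma r :=
    (div_pos (Real.rpow_pos_of_pos (by linarith) r) (Real.Gamma_pos_of_pos (by linarith))).le
  have h2 : (0:ℝ) ≤ x ^ (r - 1) := Real.rpow_nonneg hx _
  positivity

lemma integrableOn_gammaRRpdf (r : ℝ) (hr : 1 < r) :
    IntegrableOn (gammaRRpdf r) (Set.Ioi 0) := by
  have h := integrableOn_rpow_mul_exp_neg_mul_rpow (p := 1) (s := r - 1) (b := r)
    (by linarith) one_pos (by linarith)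
  simp only [Real.rpow_one] at h
  have h2 := h.const_mul (r ^ r / Real.Gamma r)
  have heq : gammaRRpdf r = fun x : ℝ => r ^ r / Real.Gamma r * (x ^ (r - 1) * Real.exp (-r * x)) := by
    funext x; unfold gammaRRpdf; ring
  rw [heq]
  exact h2

lemma gammaRRcdf_nonneg (r : ℝ) (hr : 1 < r) (t : ℝ) : 0 ≤ gammaRRcdf r t :=
  setIntegral_nonneg measurableSet_Ioc (fun u hu => gammaRRpdf_nonneg r hr (le_of_lt hu.1))

lemma gammaRRcdf_le_integral (r : ℝ) (hr : 1 < r) (t : ℝ) :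
    gammaRRcdf r t ≤ ∫ u in Set.Ioi (0:ℝ), gammaRRpdf r u := by
  refine setIntegral_mono_set (integrableOn_gammaRRpdf r hr) ?_ ?_
  · exact (ae_restrict_iff' measurableSet_Ioi).2
      (Filter.Eventually.of_forall fun u hu => gammaRRpdf_nonneg r hr (le_of_lt hu))
  · exact HasSubset.Subset.eventuallyLE (fun u hu => hu.1)

lemma gammaRRpdf_mul_bound (r : ℝ) (hr : 1 < r) :
    ∃ P : ℝ, 0 ≤ P ∧ ∀ x : ℝ, 0 ≤ x → gammaRRpdf r x * |1 - x| ≤ P := by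
  set c := r ^ r / Real.Gamma r with hc
  have hcpos : 0 < c :=
    div_pos (Real.rpow_pos_of_pos (by linarith) r) (Real.Gamma_pos_of_pos (by linarith))
  obtain ⟨M₁, hM₁0, hM₁⟩ := rpow_le_mul_exp (r - 1) (1/2) (by linarith) (by norm_num)
  obtain ⟨M₂, hM₂0, hM₂⟩ := rpow_le_mul_exp 1 (1/2) zero_le_one (by norm_num)
  refine ⟨c * (M₁ + M₁ * M₂), by positivity, fun x hx => ?_⟩
  have hA := hM₁ x hx
  have hB := hM₂ x hx
  rw [Real.rpow_one] at hB
  have hE0 : (0:ℝ) < Real.exp (-r * x) := Real.exp_pos _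
  have hX0 : (0:ℝ) ≤ x ^ (r - 1) := Real.rpow_nonneg hx _
  have key1 : Real.exp (1/2 * x) * Real.exp (-r * x) ≤ 1 := by
    rw [← Real.exp_add]; exact Real.exp_le_one_iff.mpr (by nlinarith)
  have key2 : Real.exp (1/2 * x) * Real.exp (1/2 * x) * Real.exp (-r * x) ≤ 1 := by
    rw [← Real.exp_add, ← Real.exp_add]; exact Real.exp_le_one_iff.mpr (by nlinarith)
  have habs : |1 - x| ≤ 1 + x := abs_le.mpr ⟨by linarith, by linarith⟩
  have p1 : x ^ (r - 1) * Real.exp (-r * x) ≤ M₁ := by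
    calc x ^ (r - 1) * Real.exp (-r * x) ≤ M₁ * Real.exp (1/2 * x) * Real.exp (-r * x) :=
      mul_le_mul_of_nonneg_right hA hE0.le
    _ = M₁ * (Real.exp (1/2 * x) * Real.exp (-r * x)) := by ring
    _ ≤ M₁ * 1 := mul_le_mul_of_nonneg_left key1 hM₁0
    _ = M₁ := mul_one _
  have p2 : x ^ (r - 1) * x * Real.exp (-r * x) ≤ M₁ * M₂ := by
    have hxx : x ^ (r - 1) * x ≤ M₁ * Real.exp (1/2 * x) * (M₂ * Real.exp (1/2 * x)) :=
      mul_le_mul hA hB hx (by positivity)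
    calc x ^ (r - 1) * x * Real.exp (-r * x)
        ≤ M₁ * Real.exp (1/2 * x) * (M₂ * Real.exp (1/2 * x)) * Real.exp (-r * x) :=
      mul_le_mul_of_nonneg_right hxx hE0.le
    _ = M₁ * M₂ * (Real.exp (1/2 * x) * Real.exp (1/2 * x) * Real.exp (-r * x)) := by ring
    _ ≤ M₁ * M₂ * 1 := mul_le_mul_of_nonneg_left key2 (by positivity)
    _ = M₁ * M₂ := mul_one _
  have hpdf0 : 0 ≤ gammaRRpdf r x := gammaRRpdf_nonneg r hr hx
  calc gammaRRpdf r x * |1 - x| ≤ gammaRRpdf r x * (1 + x) :=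
    mul_le_mul_of_nonneg_left habs hpdf0
  _ = c * (x ^ (r - 1) * Real.exp (-r * x) + x ^ (r - 1) * x * Real.exp (-r * x)) := by
      unfold gammaRRpdf; rw [← hc]; ring
  _ ≤ c * (M₁ + M₁ * M₂) := by
      refine mul_le_mul_of_nonneg_left ?_ hcpos.le
      linarith

lemma gammaRRpdf_pointwise_A1 (r : ℝ) (hr : 1 < r) (hr2 : r ≤ 2) {x u q : ℝ}
    (hx : 0 ≤ x) (hx1 : x ≤ 1) (hxu : x < u) (hdq : u - x ≤ q) (hq2 : q ≤ 1) :
    |gammaRRpdf r u - gammaRRpdf r x|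
      ≤ r ^ r / Real.Gamma r * (1 + r) * q ^ (r - 1) := by
  have hr0 : (0:ℝ) < r := by linarith
  set c := r ^ r / Real.Gamma r with hc
  have hcpos : 0 < c := div_pos (Real.rpow_pos_of_pos hr0 r) (Real.Gamma_pos_of_pos hr0)
  clear_value c
  have hu0 : 0 ≤ u := le_trans hx hxu.le
  have hd0 : 0 < u - x := by linarith
  have hd1 : u - x ≤ 1 := le_trans hdq hq2
  have hq0 : 0 < q := lt_of_lt_of_le hd0 hdq
  have hrw : gammaRRpdf r u - gammaRRpdf r x
      = c * ((u ^ (r-1) - x ^ (r-1)) * Real.exp (-r * u))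
        + c * (x ^ (r-1) * (Real.exp (-r * u) - Real.exp (-r * x))) := by
    unfold gammaRRpdf; rw [← hc]; ring
  have hmono : x ^ (r-1) ≤ u ^ (r-1) := Real.rpow_le_rpow hx hxu.le (by linarith)
  have hhold : u ^ (r-1) - x ^ (r-1) ≤ (u - x) ^ (r-1) :=
    rpow_sub_rpow_le (by linarith) (by linarith) hx hxu.le
  have hEu : Real.exp (-r * u) ≤ 1 := Real.exp_le_one_iff.mpr
    (by nlinarith [mul_nonneg hr0.le hu0])
  have hEu0 : (0:ℝ) < Real.exp (-r * u) := Real.exp_pos _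
  have hX1 : x ^ (r-1) ≤ 1 := Real.rpow_le_one hx hx1 (by linarith)
  have hX0 : (0:ℝ) ≤ x ^ (r-1) := Real.rpow_nonneg hx _
  have hrux : -r * u ≤ -r * x := by
    have := mul_le_mul_of_nonneg_left hxu.le hr0.le
    linarith
  have hEmono : Real.exp (-r * u) ≤ Real.exp (-r * x) := Real.exp_le_exp.mpr hrux
  have hexp : Real.exp (-r * x) - Real.exp (-r * u) ≤ r * (u - x) := by
    have h := exp_sub_exp_le (a := -r * x) (b := -r * u)
      (by nlinarith [mul_nonneg hr0.le hx]) hrux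
    linarith
  have hd0' : (0:ℝ) ≤ (u - x) ^ (r-1) := Real.rpow_nonneg hd0.le _
  have ht1 : |c * ((u ^ (r-1) - x ^ (r-1)) * Real.exp (-r * u))|
      ≤ c * (u - x) ^ (r-1) := by
    rw [abs_mul, abs_of_pos hcpos]
    refine mul_le_mul_of_nonneg_left ?_ hcpos.le
    rw [abs_mul, abs_of_nonneg (by linarith), abs_of_pos hEu0]
    have h8 : (u ^ (r-1) - x ^ (r-1)) * Real.exp (-r * u) ≤ (u ^ (r-1) - x ^ (r-1)) * 1 :=
      mul_le_mul_of_nonneg_left hEu (by linarith)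
    rw [mul_one] at h8
    linarith
  have ht2 : |c * (x ^ (r-1) * (Real.exp (-r * u) - Real.exp (-r * x)))|
      ≤ c * (r * (u - x)) := by
    rw [abs_mul, abs_of_pos hcpos]
    refine mul_le_mul_of_nonneg_left ?_ hcpos.le
    rw [abs_mul, abs_of_nonneg hX0, abs_of_nonpos (by linarith)]
    have h9 : x ^ (r-1) * (Real.exp (-r * x) - Real.exp (-r * u)) ≤ 1 * (r * (u - x)) :=
      mul_le_mul hX1 hexp (by linarith) zero_le_one
    nlinarith [h9]
  have hdle : u - x ≤ (u - x) ^ (r - 1) := by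
    have h := Real.rpow_le_rpow_of_exponent_ge hd0 hd1 (by linarith : r - 1 ≤ 1)
    rwa [Real.rpow_one] at h
  have hdd : (u - x) ^ (r-1) ≤ q ^ (r-1) :=
    Real.rpow_le_rpow hd0.le hdq (by linarith)
  rw [hrw]
  have habs2 := (abs_add_le (c * ((u ^ (r-1) - x ^ (r-1)) * Real.exp (-r * u)))
    (c * (x ^ (r-1) * (Real.exp (-r * u) - Real.exp (-r * x))))).trans (add_le_add ht1 ht2)
  have h3 : c * (r * (u - x)) ≤ c * r * ((u - x) ^ (r-1)) := by
    have := mul_le_mul_of_nonneg_left hdle (mul_nonneg hcpos.le hr0.le)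
    linarith
  have h5 : c * (1 + r) * ((u-x) ^ (r-1)) ≤ c * (1 + r) * (q ^ (r-1)) :=
    mul_le_mul_of_nonneg_left hdd (by positivity)
  linarith

set_option maxHeartbeats 2000000 in
/-- First-order Taylor estimate for the Gamma(r,r) distribution function, uniform
in `x ≥ 0` and `g ≥ 1`:
`|G_{r,r}(x + (1-x)/g) - G_{r,r}(x) - g_{r,r}(x)(1-x)/g| ≤ C g^{-min{r,2}}`. -/
theorem gammaRRcdf_taylor_shift_bound (r : ℝ) (hr : 1 < r) :
    ∃ C : ℝ, ∀ x : ℝ, 0 ≤ x → ∀ g : ℝ, 1 ≤ g →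
      |gammaRRcdf r (x + (1 - x) / g) - gammaRRcdf r x
          - gammaRRpdf r x * (1 - x) / g|
        ≤ C * g ^ (-(min r 2)) := by
  have hr0 : (0:ℝ) < r := by linarith
  set c := r ^ r / Real.Gamma r with hc
  have hcpos : 0 < c := div_pos (Real.rpow_pos_of_pos hr0 r) (Real.Gamma_pos_of_pos hr0)
  obtain ⟨D, hD0, hD⟩ := gammaRRpdf'_bound r hr
  obtain ⟨P, hP0, hP⟩ := gammaRRpdf_mul_bound r hr
  have hInt := integrableOn_gammaRRpdf r hr
  set B := ∫ u in Set.Ioi (0:ℝ), gammaRRpdf r u with hB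
  have hB0 : 0 ≤ B :=
    setIntegral_nonneg measurableSet_Ioi (fun u hu => gammaRRpdf_nonneg r hr (le_of_lt hu))
  set L := c * (2 * r) with hL
  have hL0 : 0 ≤ L := by positivity
  set K1 := c * (1 + r) with hK1
  have hK10 : 0 ≤ K1 := by positivity
  clear_value c B L K1
  refine ⟨4 * (2 * B + P) + K1 + L + 8 * D, ?_⟩
  intro x hx g hg
  set m := min r 2 with hm
  clear_value m
  have hm1 : 1 < m := by rw [hm]; exact lt_min hr one_lt_two
  have hm2 : m ≤ 2 := by rw [hm]; exact min_le_right _ _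
  have hg0 : (0:ℝ) < g := by linarith
  have hgm0 : (0:ℝ) ≤ g ^ (-m) := Real.rpow_nonneg hg0.le _
  set y := x + (1 - x) / g with hy
  clear_value y
  have hyx : y - x = (1 - x) / g := by rw [hy]; ring
  -- y is between min(x,1) and max(x,1)
  have hy0 : 0 ≤ y := by
    rcases le_total x 1 with h1 | h1
    · have h2 : 0 ≤ (1 - x) / g := div_nonneg (by linarith) hg0.le
      rw [hy]; linarith
    · have h2 : (x - 1) / g ≤ x - 1 := div_le_self (by linarith) hg
      have : (1 - x) / g = -((x - 1) / g) := by ring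
      rw [hy, this]; linarith
  -- interval integrability
  have hII : ∀ a b : ℝ, 0 ≤ a → 0 ≤ b → IntervalIntegrable (gammaRRpdf r) volume a b := by
    intro a b ha hb
    constructor
    · exact hInt.mono_set (fun u hu => lt_of_le_of_lt ha hu.1)
    · exact hInt.mono_set (fun u hu => lt_of_le_of_lt hb hu.1)
  have hcdf_eq : ∀ t : ℝ, 0 ≤ t → gammaRRcdf r t = ∫ u in (0:ℝ)..t, gammaRRpdf r u := by
    intro t ht; rw [intervalIntegral.integral_of_le ht]; rfl
  have hdiff : gammaRRcdf r y - gammaRRcdf r x = ∫ u in x..y, gammaRRpdf r u := by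
    rw [hcdf_eq y hy0, hcdf_eq x hx,
      ← intervalIntegral.integral_add_adjacent_intervals (hII 0 x le_rfl hx) (hII x y hx hy0)]
    ring
  have hE : gammaRRcdf r y - gammaRRcdf r x - gammaRRpdf r x * (1 - x) / g
      = ∫ u in x..y, (gammaRRpdf r u - gammaRRpdf r x) := by
    have h0 : (∫ u in x..y, (gammaRRpdf r u - gammaRRpdf r x))
        = (∫ u in x..y, gammaRRpdf r u) - (y - x) * gammaRRpdf r x := by
      rw [intervalIntegral.integral_sub (hII x y hx hy0) intervalIntegrable_const,
        intervalIntegral.integral_const, smul_eq_mul]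
    rw [h0, ← hdiff, hyx]; ring
  have h1div : ∀ s : ℝ, ((1:ℝ)/g) ^ s = g ^ (-s) := fun s => by
    rw [one_div, Real.inv_rpow hg0.le, ← Real.rpow_neg hg0.le]
  have hmono2 : g ^ (-(2:ℝ)) ≤ g ^ (-m) :=
    Real.rpow_le_rpow_of_exponent_le hg (by linarith)
  have hg2eq : ((1:ℝ)/g) * ((1:ℝ)/g) = g ^ (-(2:ℝ)) := by
    rw [← h1div 2, show ((2:ℝ)) = ((2:ℕ):ℝ) by norm_num, Real.rpow_natCast]
    ring
  rcases le_total x 1 with hx1 | hx1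
  · -- Case A : x ≤ 1
    have hq0 : 0 ≤ (1 - x) / g := div_nonneg (by linarith) hg0.le
    have hxy : x ≤ y := by rw [hy]; linarith
    have hy1 : y ≤ 1 := by
      have := div_le_self (by linarith : (0:ℝ) ≤ 1 - x) hg
      rw [hy]; linarith
    have hIoc : Set.uIoc x y = Set.Ioc x y := Set.uIoc_of_le hxy
    have hq1 : (1 - x) / g ≤ 1 / g := by gcongr; linarith
    have hq2 : (1 - x) / g ≤ 1 := le_trans hq1 (by rw [div_le_one hg0]; exact hg)
    have habsyx : |y - x| = (1 - x) / g := by rw [hyx, abs_of_nonneg hq0]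
    rcases le_total r 2 with hr2 | hr2
    · -- A1 : 1 < r ≤ 2
      have hmr : m = r := by rw [hm]; exact min_eq_left hr2
      have hKpt : ∀ u ∈ Set.uIoc x y,
          ‖gammaRRpdf r u - gammaRRpdf r x‖ ≤ K1 * ((1 - x) / g) ^ (r - 1) := by
        intro u hu
        rw [hIoc] at hu
        obtain ⟨hxu, huy⟩ := hu
        have hdq : u - x ≤ (1 - x) / g := by rw [hy] at huy; linarith
        have h := gammaRRpdf_pointwise_A1 r hr hr2 hx hx1 hxu hdq hq2
        rw [Real.norm_eq_abs, hK1, hc]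
        exact h
      have hIb := intervalIntegral.norm_integral_le_of_norm_le_const hKpt
      rw [habsyx] at hIb
      rw [hE, ← Real.norm_eq_abs]
      have hq1' : ((1-x)/g) ^ (r-1) ≤ ((1:ℝ)/g) ^ (r-1) :=
        Real.rpow_le_rpow hq0 hq1 (by linarith)
      have hg1 : (0:ℝ) < 1/g := by positivity
      have hcomb : K1 * ((1-x)/g) ^ (r-1) * ((1-x)/g) ≤ K1 * (((1:ℝ)/g) ^ (r-1) * ((1:ℝ)/g)) := by
        have e1 : ((1-x)/g) ^ (r-1) * ((1-x)/g) ≤ ((1:ℝ)/g) ^ (r-1) * ((1:ℝ)/g) :=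
          mul_le_mul hq1' hq1 hq0 (Real.rpow_nonneg hg1.le _)
        have := mul_le_mul_of_nonneg_left e1 hK10
        linarith
      have hpow : ((1:ℝ)/g) ^ (r-1) * ((1:ℝ)/g) = g ^ (-m) := by
        rw [hmr]
        rw [show ((1:ℝ)/g) ^ (r-1) * ((1:ℝ)/g) = ((1:ℝ)/g) ^ (r-1) * ((1:ℝ)/g) ^ (1:ℝ) by
          rw [Real.rpow_one]]
        rw [← Real.rpow_add hg1, show r - 1 + 1 = r by ring, h1div]
      calc ‖∫ u in x..y, (gammaRRpdf r u - gammaRRpdf r x)‖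
          ≤ K1 * ((1-x)/g) ^ (r-1) * ((1-x)/g) := hIb
        _ ≤ K1 * (((1:ℝ)/g) ^ (r-1) * ((1:ℝ)/g)) := hcomb
        _ = K1 * g ^ (-m) := by rw [hpow]
        _ ≤ (4 * (2 * B + P) + K1 + L + 8 * D) * g ^ (-m) := by
            refine mul_le_mul_of_nonneg_right ?_ hgm0
            linarith
    · -- A2 : 2 ≤ r
      have hmr : m = 2 := by rw [hm]; exact min_eq_right hr2
      have hKpt : ∀ u ∈ Set.uIoc x y,
          ‖gammaRRpdf r u - gammaRRpdf r x‖ ≤ L * ((1 - x) / g) := by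
        intro u hu
        rw [hIoc] at hu
        obtain ⟨hxu, huy⟩ := hu
        have hdq : u - x ≤ (1 - x) / g := by have := hyx; linarith
        have key := gammaRRpdf_sub_le r (a := x) (b := u) (Or.inr hr2) hxu.le
          (fun v hv => by
            have hv0 : 0 ≤ v := le_trans hx hv.1
            have hv1 : v ≤ 1 := le_trans hv.2 (le_trans huy hy1)
            have := gammaRRpdf'_bound01 r hr hr2 v ⟨hv0, hv1⟩
            rwa [← hc, ← hL] at this)
        rw [Real.norm_eq_abs]
        refine key.trans ?_
        exact mul_le_mul_of_nonneg_left hdq hL0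
      have hIb := intervalIntegral.norm_integral_le_of_norm_le_const hKpt
      rw [habsyx] at hIb
      rw [hE, ← Real.norm_eq_abs]
      have hcomb : L * ((1-x)/g) * ((1-x)/g) ≤ L * (((1:ℝ)/g) * ((1:ℝ)/g)) := by
        have hg1 : (0:ℝ) < 1/g := by positivity
        have e1 : ((1-x)/g) * ((1-x)/g) ≤ ((1:ℝ)/g) * ((1:ℝ)/g) :=
          mul_le_mul hq1 hq1 hq0 hg1.le
        have := mul_le_mul_of_nonneg_left e1 hL0
        linarith
      calc ‖∫ u in x..y, (gammaRRpdf r u - gammaRRpdf r x)‖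
          ≤ L * ((1-x)/g) * ((1-x)/g) := hIb
        _ ≤ L * (((1:ℝ)/g) * ((1:ℝ)/g)) := hcomb
        _ = L * g ^ (-(2:ℝ)) := by rw [hg2eq]
        _ ≤ L * g ^ (-m) := by
            refine mul_le_mul_of_nonneg_left ?_ hL0
            rw [hmr]
        _ ≤ (4 * (2 * B + P) + K1 + L + 8 * D) * g ^ (-m) := by
            refine mul_le_mul_of_nonneg_right ?_ hgm0
            linarith
  · -- Case B : 1 ≤ x
    have hxminusy : x - y = (x - 1)/g := by rw [hy]; ring
    have ht0 : (0:ℝ) ≤ x - 1 := by linarith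
    have hq0 : 0 ≤ (x - 1) / g := div_nonneg ht0 hg0.le
    have hyx' : y ≤ x := by
      have : 0 ≤ x - y := by rw [hxminusy]; exact hq0
      linarith
    have hy1 : 1 ≤ y := by
      have h2 : (x - 1) / g ≤ x - 1 := div_le_self ht0 hg
      have : x - y ≤ x - 1 := by rw [hxminusy]; exact h2
      linarith
    rcases le_total g 2 with hgle2 | hgle2
    · -- B1 : crude bound
      have hcy0 := gammaRRcdf_nonneg r hr y
      have hcyB : gammaRRcdf r y ≤ B := by
        have := gammaRRcdf_le_integral r hr y; rwa [← hB] at this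
      have hcx0 := gammaRRcdf_nonneg r hr x
      have hcxB : gammaRRcdf r x ≤ B := by
        have := gammaRRcdf_le_integral r hr x; rwa [← hB] at this
      have hfx : |gammaRRpdf r x * (1-x)/g| ≤ P := by
        rw [abs_div, abs_mul, abs_of_nonneg (gammaRRpdf_nonneg r hr hx), abs_of_pos hg0]
        calc gammaRRpdf r x * |1-x| / g ≤ gammaRRpdf r x * |1-x| / 1 := by
              gcongr
              exact mul_nonneg (gammaRRpdf_nonneg r hr hx) (abs_nonneg _)
          _ = gammaRRpdf r x * |1-x| := by ring
          _ ≤ P := hP x hx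
      have h1 : |gammaRRcdf r y - gammaRRcdf r x - gammaRRpdf r x * (1-x)/g| ≤ 2*B + P := by
        have := abs_le.mp hfx
        refine abs_le.mpr ⟨by linarith, by linarith⟩
      have h2 : (2:ℝ)^(-m) ≤ g^(-m) :=
        Real.rpow_le_rpow_of_nonpos hg0 hgle2 (by linarith)
      have h4 : (2:ℝ)^(-(2:ℝ)) = 1/4 := by
        rw [show (-(2:ℝ)) = ((-2 : ℤ) : ℝ) by norm_num, Real.rpow_intCast]
        norm_num
      have h3 : (1:ℝ)/4 ≤ (2:ℝ)^(-m) := by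
        have := Real.rpow_le_rpow_of_exponent_le (one_le_two (α := ℝ)) (by linarith : -(2:ℝ) ≤ -m)
        linarith [h4 ▸ this]
      have h5 : (1:ℝ)/4 ≤ g^(-m) := le_trans h3 h2
      have h6 : 2*B + P ≤ (4 * (2*B + P)) * g^(-m) := by
        have := mul_le_mul_of_nonneg_left h5 (show (0:ℝ) ≤ 4 * (2*B + P) by linarith)
        linarith
      have h7 : (0:ℝ) ≤ (K1 + L + 8*D) * g^(-m) := by positivity
      calc |gammaRRcdf r y - gammaRRcdf r x - gammaRRpdf r x * (1-x)/g|
          ≤ 2*B + P := h1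
        _ ≤ (4 * (2*B + P)) * g^(-m) := h6
        _ ≤ (4 * (2 * B + P) + K1 + L + 8 * D) * g ^ (-m) := by
            refine mul_le_mul_of_nonneg_right ?_ hgm0
            linarith
    · -- B2 : 2 ≤ g
      have hIoc : Set.uIoc x y = Set.Ioc y x := by
        rw [Set.uIoc_comm]; exact Set.uIoc_of_le hyx'
      have hKpt : ∀ u ∈ Set.uIoc x y,
          ‖gammaRRpdf r u - gammaRRpdf r x‖ ≤ D * Real.exp (-y) * ((x-1)/g) := by
        intro u hu
        rw [hIoc] at hu
        obtain ⟨hyu, hux⟩ := hu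
        have hu1 : 1 ≤ u := le_trans hy1 hyu.le
        have key := gammaRRpdf_sub_le r (a := u) (b := x) (Or.inl (by linarith)) hux
          (K := D * Real.exp (-y)) (fun v hv => by
            have hv1 : 1 ≤ v := le_trans hu1 hv.1
            refine (hD v hv1).trans ?_
            have : Real.exp (-v) ≤ Real.exp (-y) := by
              apply Real.exp_le_exp.mpr
              have : y ≤ v := le_trans (le_trans hyu.le hv.1) le_rfl
              linarith [le_trans hyu.le hv.1]
            exact mul_le_mul_of_nonneg_left this hD0)
        rw [Real.norm_eq_abs, abs_sub_comm]
        refine key.trans ?_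
        have hxu : x - u ≤ (x-1)/g := by
          have := hxminusy
          linarith
        exact mul_le_mul_of_nonneg_left hxu (by positivity)
      have hIb := intervalIntegral.norm_integral_le_of_norm_le_const hKpt
      have habsyx : |y - x| = (x - 1)/g := by
        rw [abs_sub_comm, abs_of_nonneg (by linarith [hxminusy] : (0:ℝ) ≤ x - y), hxminusy]
      rw [habsyx] at hIb
      rw [hE, ← Real.norm_eq_abs]
      -- exp decay kills (x-1)^2
      have hyget : 1 + (x-1)/2 ≤ y := by
        have h2 : (x-1)/g ≤ (x-1)/2 := by gcongr
        have := hxminusy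
        linarith
      have ht8 : (x-1)^2 ≤ 8 * Real.exp ((x-1)/2) := by
        have h := pow_le_factorial_mul_exp (show (0:ℝ) ≤ (x-1)/2 by linarith) 2
        norm_num [Nat.factorial] at h
        nlinarith [h]
      have hkey : Real.exp (-y) * (x-1)^2 ≤ 8 := by
        have h1 : Real.exp (-y) ≤ Real.exp (-((x-1)/2)) :=
          Real.exp_le_exp.mpr (by linarith)
        have h2 : Real.exp (-((x-1)/2)) * Real.exp ((x-1)/2) = 1 := by
          rw [← Real.exp_add]; simp
        have s1 : Real.exp (-y) * (x-1)^2 ≤ Real.exp (-((x-1)/2)) * (x-1)^2 :=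
          mul_le_mul_of_nonneg_right h1 (sq_nonneg _)
        have s2 : Real.exp (-((x-1)/2)) * (x-1)^2 ≤ Real.exp (-((x-1)/2)) * (8 * Real.exp ((x-1)/2)) :=
          mul_le_mul_of_nonneg_left ht8 (Real.exp_pos _).le
        have s3 : Real.exp (-((x-1)/2)) * (8 * Real.exp ((x-1)/2)) = 8 := by
          rw [show Real.exp (-((x-1)/2)) * (8 * Real.exp ((x-1)/2))
            = 8 * (Real.exp (-((x-1)/2)) * Real.exp ((x-1)/2)) by ring, h2]; norm_num
        linarith
      have hstep : D * Real.exp (-y) * ((x-1)/g) * ((x-1)/g)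
          ≤ 8 * D * (((1:ℝ)/g) * ((1:ℝ)/g)) := by
        have e1 : D * Real.exp (-y) * ((x-1)/g) * ((x-1)/g)
            = D * (Real.exp (-y) * (x-1)^2) * (((1:ℝ)/g) * ((1:ℝ)/g)) := by
          field_simp
        rw [e1]
        have hp : (0:ℝ) ≤ ((1:ℝ)/g) * ((1:ℝ)/g) := by positivity
        have h10 : D * (Real.exp (-y) * (x-1)^2) ≤ D * 8 :=
          mul_le_mul_of_nonneg_left hkey hD0
        have := mul_le_mul_of_nonneg_right h10 hp
        linarith
      calc ‖∫ u in x..y, (gammaRRpdf r u - gammaRRpdf r x)‖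
          ≤ D * Real.exp (-y) * ((x-1)/g) * ((x-1)/g) := hIb
        _ ≤ 8 * D * (((1:ℝ)/g) * ((1:ℝ)/g)) := hstep
        _ = 8 * D * g ^ (-(2:ℝ)) := by rw [hg2eq]
        _ ≤ 8 * D * g ^ (-m) := mul_le_mul_of_nonneg_left hmono2 (by linarith)
        _ ≤ (4 * (2 * B + P) + K1 + L + 8 * D) * g ^ (-m) := by
            refine mul_le_mul_of_nonneg_right ?_ hgm0
            linarith
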